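/- arXiv:1607.00458 — 2 statements merged into one kernel-verified Lean document; each statement's English description precedes it below -/
import Mathlib

section
/- Let μ > 0 and let {u_j} ⊂ X₀ be a bounded sequence weakly convergent in X₀ to some u_∞ ∈ X₀. Then, with Ê_μ(u) := (1/2)‖u‖² − (μ/2*)∫_Ω |u|^{2*} dx, one has liminf_{j→∞} (Ê_μ(u_j) − Ê_μ(u_∞)) ≥ liminf_{j→∞} [ (1/2 − (c_{2*}^{2*} μ / 2*) ‖u_j − u_∞‖^{2*−2}) ‖u_j − u_∞‖² ]. -/
open MeasureTheory Filter Topology Set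

noncomputable section

/-- Euclidean space `ℝⁿ`. -/
abbrev EV (n : ℕ) := EuclideanSpace ℝ (Fin n)

/-- The fractional critical Sobolev exponent `2* = 2n/(n-2s)`. -/
def twoStar (n : ℕ) (s : ℝ) : ℝ := 2 * n / (n - 2 * s)

/-- Gagliardo-type bilinear form `⟨u,v⟩ = ∬ (u(x)-u(y))(v(x)-v(y)) K(x-y) dx dy`. -/
def gInner {n : ℕ} (K : EV n → ℝ) (u v : EV n → ℝ) : ℝ :=
  ∫ p : EV n × EV n, (u p.1 - u p.2) * (v p.1 - v p.2) * K (p.1 - p.2)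

/-- Gagliardo norm `‖u‖ = ⟨u,u⟩^{1/2}`. -/
def gNorm {n : ℕ} (K : EV n → ℝ) (u : EV n → ℝ) : ℝ := Real.sqrt (gInner K u u)

/-- Membership in the space `X₀`: measurable, vanishing a.e. outside `Ω`,
with finite Gagliardo seminorm. -/
structure MemX0 {n : ℕ} (K : EV n → ℝ) (Ω : Set (EV n)) (u : EV n → ℝ) : Prop where
  meas : Measurable u
  zero : ∀ᵐ x ∂(volume : Measure (EV n)), x ∉ Ω → u x = 0
  fin : Integrable (fun p : EV n × EV n => (u p.1 - u p.2) ^ 2 * K (p.1 - p.2))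

/-- `L^p` norm (real exponent `p`) on `Ω`. -/
def lpNorm {n : ℕ} (Ω : Set (EV n)) (p : ℝ) (u : EV n → ℝ) : ℝ :=
  (∫ x in Ω, |u x| ^ p) ^ (1 / p)

/-- Weak convergence in `X₀`. -/
def WeakConv {n : ℕ} (K : EV n → ℝ) (Ω : Set (EV n)) (uj : ℕ → EV n → ℝ)
    (u : EV n → ℝ) : Prop :=
  ∀ v, MemX0 K Ω v → Tendsto (fun j => gInner K (uj j) v) atTop (𝓝 (gInner K u v))

/-- The singular kernel `|x|^{-(n+2s)}` of the fractional Laplacian. -/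
def fracKernel (n : ℕ) (s : ℝ) : EV n → ℝ := fun x => ‖x‖ ^ (-((n : ℝ) + 2 * s))

/-- The energy functional `E_{λ,μ}`. -/
def energy {n : ℕ} (s : ℝ) (K : EV n → ℝ) (Ω : Set (EV n)) (μ lam : ℝ)
    (g : ℝ → ℝ) (u : EV n → ℝ) : ℝ :=
  1 / 2 * gNorm K u ^ 2 - μ / twoStar n s * (∫ x in Ω, |u x| ^ twoStar n s)
    - lam * ∫ x in Ω, (∫ τ in (0:ℝ)..(u x), g τ)

/-- The functional `Ê_μ`. -/
def energyHat {n : ℕ} (s : ℝ) (K : EV n → ℝ) (Ω : Set (EV n)) (μ : ℝ)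
    (u : EV n → ℝ) : ℝ :=
  1 / 2 * gNorm K u ^ 2 - μ / twoStar n s * (∫ x in Ω, |u x| ^ twoStar n s)

/-- The functional `Ẽ_{λ,μ}`. -/
def energyTilde {n : ℕ} (s : ℝ) (K : EV n → ℝ) (Ω : Set (EV n)) (μ lam : ℝ)
    (g : ℝ → ℝ) (u : EV n → ℝ) : ℝ :=
  μ / twoStar n s * (∫ x in Ω, |u x| ^ twoStar n s)
    + lam * ∫ x in Ω, (∫ τ in (0:ℝ)..(u x), g τ)

/-- The energy functional of the singular problem. -/
def energySing {n : ℕ} (s : ℝ) (K : EV n → ℝ) (Ω : Set (EV n)) (μ lam r : ℝ)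
    (g : ℝ → ℝ) (u : EV n → ℝ) : ℝ :=
  1 / 2 * gNorm K u ^ 2 - μ / twoStar n s * (∫ x in Ω, (max (u x) 0) ^ twoStar n s)
    - lam / r * (∫ x in Ω, (max (u x) 0) ^ r)
    - lam * ∫ x in Ω, (∫ τ in (0:ℝ)..(max (u x) 0), g τ)

/-!
Write `v_j = u_j - u_∞` and `q = 2*`. Expanding the quadratic form,
`‖u_j‖² = ‖v_j‖² + 2⟨v_j, u_∞⟩ + ‖u_∞‖²`, and the cross term tends to `0` by weak convergence.
Compactness gives `u_j → u_∞` in `L¹(Ω)`, hence almost everywhere along a subsequence of any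
subsequence, and the one-sided Brezis–Lieb argument (the convexity bound
`|a + b|^q ≤ (1 + δ)|a|^q + C_δ|b|^q` and dominated convergence) yields
`∫|u_j|^q - ∫|u_∞|^q ≤ ∫|v_j|^q + o(1)`. Together with the Sobolev bound
`∫|v_j|^q ≤ c^q ‖v_j‖^q` this gives
`Ê_μ(u_j) - Ê_μ(u_∞) ≥ (1/2 - c^q μ/q ‖v_j‖^{q-2}) ‖v_j‖² - o(1)`.
-/

theorem exists_abs_add_rpow_le {q δ : ℝ} (hq : 1 ≤ q) (hδ : 0 < δ) :
    ∃ C, ∀ a b : ℝ, |a + b| ^ q ≤ (1 + δ) * |a| ^ q + C * |b| ^ q := by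
  have hlim : Tendsto (fun θ : ℝ => (1 - θ) ^ (1 - q)) (𝓝[>] 0) (𝓝 1) := by
    have hcont : ContinuousAt (fun θ : ℝ => (1 - θ) ^ (1 - q)) 0 := by
      fun_prop (disch := norm_num)
    simpa using hcont.tendsto.mono_left nhdsWithin_le_nhds
  obtain ⟨θ, hθδ, hθ0, hθ1⟩ : ∃ θ : ℝ, (1 - θ) ^ (1 - q) < 1 + δ ∧ 0 < θ ∧ θ < 1 :=
    ((hlim.eventually (gt_mem_nhds (lt_add_of_pos_right 1 hδ))).and
      (Ioo_mem_nhdsGT one_pos)).exists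
  refine ⟨θ ^ (1 - q), fun a b => ?_⟩
  have h1θ : 0 < 1 - θ := sub_pos.2 hθ1
  -- convexity of `t ↦ t ^ q` at the points `|a| / (1 - θ)` and `|b| / θ` with weights `1 - θ, θ`
  have hconv := (convexOn_rpow hq).2 (mem_Ici.2 (div_nonneg (abs_nonneg a) h1θ.le))
    (mem_Ici.2 (div_nonneg (abs_nonneg b) hθ0.le)) h1θ.le hθ0.le (by ring)
  simp only [smul_eq_mul, mul_div_cancel₀ _ h1θ.ne', mul_div_cancel₀ _ hθ0.ne',
    Real.div_rpow (abs_nonneg _) h1θ.le, Real.div_rpow (abs_nonneg _) hθ0.le] at hconv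
  have hweight : ∀ t : ℝ, 0 < t → ∀ x, t * (x / t ^ q) = t ^ (1 - q) * x := fun t ht x => by
    rw [Real.rpow_sub ht, Real.rpow_one]
    ring
  rw [hweight _ h1θ, hweight _ hθ0] at hconv
  calc |a + b| ^ q ≤ (|a| + |b|) ^ q :=
        Real.rpow_le_rpow (abs_nonneg _) (abs_add_le a b) (zero_le_one.trans hq)
    _ ≤ (1 - θ) ^ (1 - q) * |a| ^ q + θ ^ (1 - q) * |b| ^ q := hconv
    _ ≤ (1 + δ) * |a| ^ q + θ ^ (1 - q) * |b| ^ q := by gcongr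

theorem half_sub_mul_rpow_mul_sq {t q a : ℝ} (ht : 0 ≤ t) (hq : q ≠ 0) :
    (1 / 2 - a * t ^ (q - 2)) * t ^ 2 = 1 / 2 * t ^ 2 - a * t ^ q := by
  rw [sub_mul, mul_assoc, ← Real.rpow_two, ← Real.rpow_add' ht (by simpa using hq), sub_add_cancel]

theorem neg_mul_rpow_le_half_sub_mul_rpow_mul_sq {t T q a : ℝ} (ht : 0 ≤ t) (htT : t ≤ T)
    (hq : 0 < q) (ha : 0 ≤ a) : -(a * T ^ q) ≤ (1 / 2 - a * t ^ (q - 2)) * t ^ 2 := by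
  rw [half_sub_mul_rpow_mul_sq ht hq.ne']
  nlinarith [mul_le_mul_of_nonneg_left (Real.rpow_le_rpow ht htT hq.le) ha, sq_nonneg t]

theorem liminf_le_liminf_of_forall_eventually_le_add {ι : Type*} {l : Filter ι} [l.NeBot]
    {a b : ι → ℝ} (ha : IsBoundedUnder (· ≥ ·) l a) (hb : IsBoundedUnder (· ≤ ·) l b)
    (h : ∀ ε > 0, ∀ᶠ i in l, a i ≤ b i + ε) : liminf a l ≤ liminf b l := by
  refine le_of_forall_lt_imp_le_of_dense fun r hr => le_liminf_of_le hb.isCoboundedUnder_ge ?_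
  filter_upwards [eventually_lt_of_lt_liminf (add_lt_of_lt_sub_right
    (half_lt_self (sub_pos.2 hr))) ha, h _ (half_pos (sub_pos.2 hr))] with i hai hbi
  linarith

theorem integrable_and_integral_le_of_monotone {α : Type*} [MeasurableSpace α] {μ : Measure α}
    {f : ℕ → α → ℝ} {F : α → ℝ} {R : ℝ} (hf : ∀ N, Integrable (f N) μ)
    (hf0 : ∀ N x, 0 ≤ f N x) (hmono : ∀ x, Monotone fun N => f N x)
    (hF : ∀ x, Tendsto (fun N => f N x) atTop (𝓝 (F x))) (hR : ∀ N, ∫ x, f N x ∂μ ≤ R) :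
    Integrable F μ ∧ ∫ x, F x ∂μ ≤ R := by
  have hF0 : 0 ≤ᵐ[μ] F := ae_of_all _ fun x => ge_of_tendsto' (hF x) fun N => hf0 N x
  have hFm : AEStronglyMeasurable F μ :=
    aestronglyMeasurable_of_tendsto_ae atTop (fun N => (hf N).1) (ae_of_all _ hF)
  have hlin : ∫⁻ x, ENNReal.ofReal (F x) ∂μ ≤ ENNReal.ofReal R := by
    refine le_of_tendsto' (lintegral_tendsto_of_tendsto_of_monotone
      (fun N => (hf N).aemeasurable.ennreal_ofReal)
      (ae_of_all _ fun x _ _ hij => ENNReal.ofReal_le_ofReal (hmono x hij))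
      (ae_of_all _ fun x => ENNReal.tendsto_ofReal (hF x))) fun N => ?_
    rw [← ofReal_integral_eq_lintegral_ofReal (hf N) (ae_of_all _ (hf0 N))]
    exact ENNReal.ofReal_le_ofReal (hR N)
  refine ⟨⟨hFm, (hasFiniteIntegral_iff_ofReal hF0).2 (hlin.trans_lt ENNReal.ofReal_lt_top)⟩, ?_⟩
  rw [integral_eq_lintegral_of_nonneg_ae hF0 hFm]
  exact ENNReal.toReal_le_of_le_ofReal ((integral_nonneg (hf0 0)).trans (hR 0)) hlin

theorem integrable_of_integrable_abs_rpow {α : Type*} [MeasurableSpace α] {μ : Measure α}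
    [IsFiniteMeasure μ] {f : α → ℝ} {q : ℝ} (hq : 1 ≤ q) (hf : AEStronglyMeasurable f μ)
    (h : Integrable (fun x => |f x| ^ q) μ) : Integrable f μ := by
  have hq' : (ENNReal.ofReal q).toReal = q := ENNReal.toReal_ofReal (zero_le_one.trans hq)
  refine MemLp.integrable (ENNReal.one_le_ofReal.2 hq) ((integrable_norm_rpow_iff hf ?_
    ENNReal.ofReal_ne_top).1 (by simpa [hq'] using h))
  exact (ENNReal.ofReal_pos.2 (zero_lt_one.trans_le hq)).ne'

theorem tendstoInMeasure_of_tendsto_integral_abs_sub {α : Type*} [MeasurableSpace α]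
    {μ : Measure α} {f : ℕ → α → ℝ} {g : α → ℝ} (hf : ∀ k, AEStronglyMeasurable (f k) μ)
    (hg : AEStronglyMeasurable g μ) (hfg : ∀ k, Integrable (fun x => f k x - g x) μ)
    (h : Tendsto (fun k => ∫ x, |f k x - g x| ∂μ) atTop (𝓝 0)) :
    TendstoInMeasure μ f atTop g := by
  refine tendstoInMeasure_of_tendsto_eLpNorm one_ne_zero hf hg ?_
  simpa [eLpNorm_one_eq_lintegral_enorm, ← ofReal_integral_norm_eq_lintegral_enorm (hfg _)]
    using ENNReal.tendsto_ofReal h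

theorem eventually_integral_abs_rpow_sub_le {α : Type*} [MeasurableSpace α] {μ : Measure α}
    {q δ ε : ℝ} (hq : 1 ≤ q) (hδ : 0 < δ) (hε : 0 < ε) {f : ℕ → α → ℝ} {g : α → ℝ}
    (hf : ∀ k, Integrable (fun x => |f k x| ^ q) μ)
    (hfg : ∀ k, Integrable (fun x => |f k x - g x| ^ q) μ)
    (hg : Integrable (fun x => |g x| ^ q) μ)
    (hlim : ∀ᵐ x ∂μ, Tendsto (fun k => f k x) atTop (𝓝 (g x))) :
    ∀ᶠ k in atTop, ∫ x, |f k x| ^ q ∂μ - (1 + δ) * ∫ x, |f k x - g x| ^ q ∂μ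
      - ∫ x, |g x| ^ q ∂μ ≤ ε := by
  obtain ⟨C, hC⟩ := exists_abs_add_rpow_le hq hδ
  set h : ℕ → α → ℝ := fun k x => |f k x| ^ q - (1 + δ) * |f k x - g x| ^ q - |g x| ^ q
  have hh : ∀ k, Integrable (h k) μ := fun k => ((hf k).sub ((hfg k).const_mul _)).sub hg
  have hq0 : 0 < q := zero_lt_one.trans_le hq
  have hbound : ∀ k x, ‖max (h k x) 0‖ ≤ |C - 1| * |g x| ^ q := fun k x => by
    have hfx := hC (f k x - g x) (g x)
    rw [sub_add_cancel] at hfx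
    rw [Real.norm_of_nonneg (le_max_right _ _)]
    refine max_le ?_ (by positivity)
    nlinarith [le_abs_self (C - 1), Real.rpow_nonneg (abs_nonneg (g x)) q]
  have hlim0 : ∀ᵐ x ∂μ, Tendsto (fun k => max (h k x) 0) atTop (𝓝 0) := hlim.mono fun x hx => by
    have hsub : Tendsto (fun k => f k x - g x) atTop (𝓝 0) := by
      simpa using hx.sub_const (g x)
    have := (((hx.abs.rpow_const (Or.inr hq0.le)).sub
      ((hsub.abs.rpow_const (Or.inr hq0.le)).const_mul (1 + δ))).sub_const (|g x| ^ q)).max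
      (tendsto_const_nhds (x := (0 : ℝ)))
    simpa [Real.zero_rpow hq0.ne'] using this
  have hpos : Tendsto (fun k => ∫ x, max (h k x) 0 ∂μ) atTop (𝓝 0) := by
    simpa using tendsto_integral_of_dominated_convergence _ (fun k => (hh k).pos_part.1)
      (hg.const_mul _) (fun k => ae_of_all _ (hbound k)) hlim0
  filter_upwards [hpos.eventually (gt_mem_nhds hε)] with k hk
  calc ∫ x, |f k x| ^ q ∂μ - (1 + δ) * ∫ x, |f k x - g x| ^ q ∂μ - ∫ x, |g x| ^ q ∂μ
      = ∫ x, h k x ∂μ := by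
        have hfk : Integrable (fun x => |f k x| ^ q - (1 + δ) * |f k x - g x| ^ q) μ :=
          (hf k).sub ((hfg k).const_mul _)
        rw [integral_sub hfk hg, integral_sub (hf k) ((hfg k).const_mul _), integral_const_mul]
    _ ≤ ∫ x, max (h k x) 0 ∂μ := integral_mono (hh k) (hh k).pos_part fun x => le_max_left _ _
    _ ≤ ε := hk.le

theorem eventually_integral_abs_rpow_sub_le_of_tendstoInMeasure {α : Type*} [MeasurableSpace α]
    {μ : Measure α} {q A ε : ℝ} (hq : 1 ≤ q) (hε : 0 < ε) {f : ℕ → α → ℝ} {g : α → ℝ}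
    (hf : ∀ k, Integrable (fun x => |f k x| ^ q) μ)
    (hfg : ∀ k, Integrable (fun x => |f k x - g x| ^ q) μ)
    (hg : Integrable (fun x => |g x| ^ q) μ) (hA : ∀ k, ∫ x, |f k x - g x| ^ q ∂μ ≤ A)
    (hlim : TendstoInMeasure μ f atTop g) :
    ∀ᶠ k in atTop, ∫ x, |f k x| ^ q ∂μ - ∫ x, |f k x - g x| ^ q ∂μ - ∫ x, |g x| ^ q ∂μ ≤ ε := by
  set δ := ε / (2 * (|A| + 1))
  have hδ : 0 < δ := by positivity
  have hδA : δ * A ≤ ε / 2 := by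
    have : δ * (|A| + 1) = ε / 2 := by
      simp only [δ]
      field_simp
    nlinarith [le_abs_self A]
  -- every subsequence has a further subsequence converging almost everywhere
  have hsub : Tendsto (fun k => ∫ x, |f k x| ^ q ∂μ - (1 + δ) * ∫ x, |f k x - g x| ^ q ∂μ
      - ∫ x, |g x| ^ q ∂μ) atTop (𝓟 (Iic (ε / 2))) := by
    refine tendsto_of_subseq_tendsto fun ns hns => ?_
    obtain ⟨ms, -, hms⟩ := (hlim.comp hns).exists_seq_tendsto_ae
    exact ⟨ms, tendsto_principal.2 <| eventually_integral_abs_rpow_sub_le hq hδ (half_pos hε)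
      (fun _ => hf _) (fun _ => hfg _) hg hms⟩
  filter_upwards [tendsto_principal.1 hsub] with k hk
  have := mul_le_mul_of_nonneg_left (hA k) hδ.le
  rw [mem_Iic] at hk
  linarith

theorem aestronglyMeasurable_of_integrable_min_sq_mul {E : Type*} [NormedAddCommGroup E]
    [MeasurableSpace E] [BorelSpace E] {μ : Measure E} [NullSingletonClass μ] {K : E → ℝ}
    (hK : Integrable (fun x => min (‖x‖ ^ 2) 1 * K x) μ) : AEStronglyMeasurable K μ := by
  refine (hK.aestronglyMeasurable.div₀
    (by fun_prop : Continuous fun x : E => min (‖x‖ ^ 2) 1).aestronglyMeasurable).congr ?_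
  filter_upwards [Measure.ae_ne μ 0] with x hx
  have : 0 < min (‖x‖ ^ 2) 1 := by positivity
  simp only [Pi.div_apply]
  field_simp

def truncate (N t : ℝ) : ℝ := max (min t N) (-N)

theorem abs_truncate_sub_truncate_le (N a b : ℝ) : |truncate N a - truncate N b| ≤ |a - b| := by
  unfold truncate
  grind [abs_le, le_abs_self, neg_abs_le]

theorem abs_truncate {N : ℝ} (hN : 0 ≤ N) (t : ℝ) : |truncate N t| = min |t| N := by
  unfold truncate
  rcases le_total 0 t with h | h <;> simp [abs_of_nonneg, abs_of_nonpos, h, max_def, min_def] <;>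
    grind

def gIntegrand {n : ℕ} (K : EV n → ℝ) (u v : EV n → ℝ) (p : EV n × EV n) : ℝ :=
  (u p.1 - u p.2) * (v p.1 - v p.2) * K (p.1 - p.2)

section Gagliardo

variable {n : ℕ} {K : EV n → ℝ} {Ω : Set (EV n)} {u v : EV n → ℝ}

theorem gInner_eq_integral_gIntegrand : gInner K u v = ∫ p, gIntegrand K u v p := rfl

theorem integrable_gIntegrand_self_iff :
    Integrable (gIntegrand K u u) ↔
      Integrable (fun p : EV n × EV n => (u p.1 - u p.2) ^ 2 * K (p.1 - p.2)) :=
  integrable_congr (ae_of_all _ fun p => by simp only [gIntegrand, sq])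

theorem MemX0.integrable_gIntegrand (hu : MemX0 K Ω u) : Integrable (gIntegrand K u u) :=
  integrable_gIntegrand_self_iff.2 hu.fin

theorem ae_fst_sub_snd_ne_zero [Nontrivial (EV n)] :
    ∀ᵐ p : EV n × EV n, p.1 - p.2 ≠ 0 := by
  rw [Measure.volume_eq_prod]
  exact (quasiMeasurePreserving_sub_of_right_invariant volume volume).ae (Measure.ae_ne _ 0)

theorem aestronglyMeasurable_gIntegrand (hK : AEStronglyMeasurable K volume)
    (hu : Measurable u) (hv : Measurable v) : AEStronglyMeasurable (gIntegrand K u v) volume := by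
  have hKsub : AEStronglyMeasurable (fun p : EV n × EV n => K (p.1 - p.2)) volume := by
    rw [Measure.volume_eq_prod]
    exact hK.comp_quasiMeasurePreserving (quasiMeasurePreserving_sub_of_right_invariant _ _)
  have hdiff : ∀ {w : EV n → ℝ}, Measurable w →
      AEStronglyMeasurable (fun p : EV n × EV n => w p.1 - w p.2) volume :=
    fun hw => ((hw.comp measurable_fst).sub (hw.comp measurable_snd)).aestronglyMeasurable
  exact ((hdiff hu).mul (hdiff hv)).mul hKsub

theorem mul_kernel_le_mul_kernel (hK : ∀ x, x ≠ 0 → 0 ≤ K x) {p : EV n × EV n} {a b : ℝ}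
    (hab : a ≤ b) (hdiag : p.1 = p.2 → a = 0 ∧ b = 0) : a * K (p.1 - p.2) ≤ b * K (p.1 - p.2) := by
  by_cases h : p.1 = p.2
  · simp [hdiag h]
  · exact mul_le_mul_of_nonneg_right hab (hK _ (sub_ne_zero.2 h))

theorem gIntegrand_self_nonneg (hK : ∀ x, x ≠ 0 → 0 ≤ K x) (u : EV n → ℝ) (p : EV n × EV n) :
    0 ≤ gIntegrand K u u p := by
  simpa [gIntegrand] using
    mul_kernel_le_mul_kernel hK (mul_self_nonneg (u p.1 - u p.2)) (by intro h; simp [h])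

theorem gInner_self_nonneg (hK : ∀ x, x ≠ 0 → 0 ≤ K x) (u : EV n → ℝ) : 0 ≤ gInner K u u :=
  integral_nonneg (gIntegrand_self_nonneg hK u)

theorem gNorm_nonneg (u : EV n → ℝ) : 0 ≤ gNorm K u := Real.sqrt_nonneg _

theorem gNorm_sq (hK : ∀ x, x ≠ 0 → 0 ≤ K x) (u : EV n → ℝ) : gNorm K u ^ 2 = gInner K u u :=
  Real.sq_sqrt (gInner_self_nonneg hK u)

theorem abs_gIntegrand_le (hK : ∀ x, x ≠ 0 → 0 ≤ K x) (u v : EV n → ℝ) (p : EV n × EV n) :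
    |gIntegrand K u v p| ≤ (gIntegrand K u u p + gIntegrand K v v p) / 2 := by
  by_cases h : p.1 = p.2
  · simp [gIntegrand, h]
  · have hKp := hK _ (sub_ne_zero.2 h)
    simp only [gIntegrand, abs_mul, abs_of_nonneg hKp]
    nlinarith [two_mul_le_add_sq |u p.1 - u p.2| |v p.1 - v p.2|, sq_abs (u p.1 - u p.2),
      sq_abs (v p.1 - v p.2)]

theorem integrable_gIntegrand (hK : ∀ x, x ≠ 0 → 0 ≤ K x) (hKm : AEStronglyMeasurable K volume)
    (hu : MemX0 K Ω u) (hv : MemX0 K Ω v) : Integrable (gIntegrand K u v) :=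
  ((hu.integrable_gIntegrand.add hv.integrable_gIntegrand).div_const 2).mono'
    (aestronglyMeasurable_gIntegrand hKm hu.meas hv.meas)
    (ae_of_all _ fun p => (Real.norm_eq_abs _).trans_le (abs_gIntegrand_le hK u v p))

theorem gIntegrand_sub_self_le (hK : ∀ x, x ≠ 0 → 0 ≤ K x) (u v : EV n → ℝ) (p : EV n × EV n) :
    gIntegrand K (fun x => u x - v x) (fun x => u x - v x) p
      ≤ 2 * (gIntegrand K u u p + gIntegrand K v v p) := by
  have h := mul_kernel_le_mul_kernel hK (p := p)
    (a := (u p.1 - v p.1 - (u p.2 - v p.2)) * (u p.1 - v p.1 - (u p.2 - v p.2)))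
    (b := 2 * ((u p.1 - u p.2) * (u p.1 - u p.2) + (v p.1 - v p.2) * (v p.1 - v p.2)))
    (by nlinarith [sq_nonneg (u p.1 - u p.2 + (v p.1 - v p.2))]) (by intro h; simp [h])
  simp only [gIntegrand]
  linarith

theorem MemX0.sub (hK : ∀ x, x ≠ 0 → 0 ≤ K x) (hKm : AEStronglyMeasurable K volume)
    (hu : MemX0 K Ω u) (hv : MemX0 K Ω v) : MemX0 K Ω (fun x => u x - v x) where
  meas := hu.meas.sub hv.meas
  zero := by
    filter_upwards [hu.zero, hv.zero] with x hux hvx hx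
    rw [hux hx, hvx hx, sub_zero]
  fin := integrable_gIntegrand_self_iff.1 <|
    ((hu.integrable_gIntegrand.add hv.integrable_gIntegrand).const_mul 2).mono'
      (aestronglyMeasurable_gIntegrand hKm (hu.meas.sub hv.meas) (hu.meas.sub hv.meas))
      (ae_of_all _ fun p => by
        rw [Real.norm_of_nonneg (gIntegrand_self_nonneg hK _ p)]
        exact gIntegrand_sub_self_le hK u v p)

theorem gNorm_sub_le (hK : ∀ x, x ≠ 0 → 0 ≤ K x) (hKm : AEStronglyMeasurable K volume)
    (hu : MemX0 K Ω u) (hv : MemX0 K Ω v) :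
    gNorm K (fun x => u x - v x) ≤ √2 * (gNorm K u + gNorm K v) := by
  have hsq : gInner K (fun x => u x - v x) (fun x => u x - v x)
      ≤ 2 * (gInner K u u + gInner K v v) := by
    simp only [gInner_eq_integral_gIntegrand]
    rw [← integral_add hu.integrable_gIntegrand hv.integrable_gIntegrand, ← integral_const_mul]
    exact integral_mono (hu.sub hK hKm hv).integrable_gIntegrand
      ((hu.integrable_gIntegrand.add hv.integrable_gIntegrand).const_mul 2)
      (gIntegrand_sub_self_le hK u v)
  rw [← Real.sqrt_sq (mul_nonneg (Real.sqrt_nonneg 2)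
    (add_nonneg (gNorm_nonneg u) (gNorm_nonneg v)))]
  refine Real.sqrt_le_sqrt (hsq.trans ?_)
  rw [mul_pow, Real.sq_sqrt zero_le_two, ← gNorm_sq hK, ← gNorm_sq hK]
  nlinarith [mul_nonneg (gNorm_nonneg (K := K) u) (gNorm_nonneg (K := K) v)]

theorem gInner_self_eq_sub (hK : ∀ x, x ≠ 0 → 0 ≤ K x) (hKm : AEStronglyMeasurable K volume)
    (hu : MemX0 K Ω u) (hv : MemX0 K Ω v) :
    gInner K u u = gInner K (fun x => u x - v x) (fun x => u x - v x)
      + 2 * (gInner K u v - gInner K v v) + gInner K v v := by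
  have huv := integrable_gIntegrand hK hKm hu hv
  have hvv := hv.integrable_gIntegrand
  have hww := (hu.sub hK hKm hv).integrable_gIntegrand
  have hpt : gIntegrand K u u = fun p => gIntegrand K (fun x => u x - v x) (fun x => u x - v x) p
      + 2 * (gIntegrand K u v p - gIntegrand K v v p) + gIntegrand K v v p := by
    funext p
    simp only [gIntegrand]
    ring
  have hcross : Integrable (fun p => 2 * (gIntegrand K u v p - gIntegrand K v v p)) :=
    (huv.sub hvv).const_mul 2
  have hsum : Integrable (fun p => gIntegrand K (fun x => u x - v x) (fun x => u x - v x) p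
      + 2 * (gIntegrand K u v p - gIntegrand K v v p)) := hww.add hcross
  simp only [gInner_eq_integral_gIntegrand, hpt]
  rw [integral_add hsum hvv, integral_add hww hcross, integral_const_mul, integral_sub huv hvv]

theorem gIntegrand_truncate_le (hK : ∀ x, x ≠ 0 → 0 ≤ K x) (N : ℝ) (u : EV n → ℝ)
    (p : EV n × EV n) :
    gIntegrand K (fun x => truncate N (u x)) (fun x => truncate N (u x)) p
      ≤ gIntegrand K u u p := by
  refine mul_kernel_le_mul_kernel hK ?_ (by intro h; simp [h])
  rw [← abs_mul_abs_self, ← abs_mul_abs_self (u p.1 - u p.2)]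
  exact mul_self_le_mul_self (abs_nonneg _) (abs_truncate_sub_truncate_le N _ _)

theorem MemX0.comp_truncate (hK : ∀ x, x ≠ 0 → 0 ≤ K x) (hKm : AEStronglyMeasurable K volume)
    (hu : MemX0 K Ω u) {N : ℝ} (hN : 0 ≤ N) : MemX0 K Ω (fun x => truncate N (u x)) where
  meas := (hu.meas.min measurable_const).max measurable_const
  zero := by
    filter_upwards [hu.zero] with x hux hx
    simp [truncate, hux hx, hN]
  fin := integrable_gIntegrand_self_iff.1 <| hu.integrable_gIntegrand.mono'
    (aestronglyMeasurable_gIntegrand hKm ((hu.meas.min measurable_const).max measurable_const)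
      ((hu.meas.min measurable_const).max measurable_const))
    (ae_of_all _ fun p => by
      rw [Real.norm_of_nonneg (gIntegrand_self_nonneg hK _ p)]
      exact gIntegrand_truncate_le hK N u p)

theorem gNorm_truncate_le (hK : ∀ x, x ≠ 0 → 0 ≤ K x) (hKm : AEStronglyMeasurable K volume)
    (hu : MemX0 K Ω u) {N : ℝ} (hN : 0 ≤ N) :
    gNorm K (fun x => truncate N (u x)) ≤ gNorm K u :=
  Real.sqrt_le_sqrt <| integral_mono (hu.comp_truncate hK hKm hN).integrable_gIntegrand
    hu.integrable_gIntegrand (gIntegrand_truncate_le hK N u)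

theorem MemX0.ae_eq_zero_of_gInner_self_eq_zero [Nontrivial (EV n)]
    (hKpos : ∀ x, x ≠ 0 → 0 < K x) (hΩ : volume Ω ≠ ⊤) (hu : MemX0 K Ω u)
    (h : gInner K u u = 0) : ∀ᵐ x, u x = 0 := by
  have hJ : gIntegrand K u u =ᵐ[volume] 0 :=
    (integral_eq_zero_iff_of_nonneg (gIntegrand_self_nonneg (fun x hx => (hKpos x hx).le) u)
      hu.integrable_gIntegrand).1 h
  have hpair : ∀ᵐ p : EV n × EV n, u p.1 = u p.2 := by
    filter_upwards [hJ, ae_fst_sub_snd_ne_zero] with p hp hne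
    have hsq : (u p.1 - u p.2) * (u p.1 - u p.2) = 0 :=
      (mul_eq_zero.1 hp).resolve_right (hKpos _ hne).ne'
    exact sub_eq_zero.1 (mul_self_eq_zero.1 hsq)
  rw [Measure.volume_eq_prod] at hpair
  have hconst : ∀ᵐ x, (∀ᵐ y, u x = u y) ∧ (x ∉ Ω → u x = 0) :=
    (Measure.ae_ae_of_ae_prod hpair).and hu.zero
  have hΩc : volume Ωᶜ ≠ 0 := by
    intro h0
    have : volume (univ : Set (EV n)) ≤ volume Ω + volume Ωᶜ :=
      (union_compl_self Ω ▸ measure_union_le Ω Ωᶜ)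
    rw [measure_univ_of_isAddLeftInvariant, h0, add_zero, top_le_iff] at this
    exact hΩ this
  obtain ⟨x₀, hx₀Ω, hx₀⟩ : ∃ x₀ ∉ Ω, (∀ᵐ y, u x₀ = u y) ∧ (x₀ ∉ Ω → u x₀ = 0) := by
    by_contra hnone
    exact hΩc (measure_mono_null (fun x hx hPx => hnone ⟨x, hx, hPx⟩) (ae_iff.1 hconst))
  filter_upwards [hx₀.1] with y hy
  rw [← hy, hx₀.2 hx₀Ω]

theorem MemX0.lpNorm_le_mul_gNorm [Nontrivial (EV n)] (hKpos : ∀ x, x ≠ 0 → 0 < K x)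
    (hΩ : volume Ω ≠ ⊤) {q c : ℝ} (hq : q ≠ 0) (hc : 0 ≤ c)
    (hsob : ∀ w, MemX0 K Ω w → ¬ (∀ᵐ x, w x = 0) → lpNorm Ω q w / gNorm K w ≤ c)
    (hu : MemX0 K Ω u) : lpNorm Ω q u ≤ c * gNorm K u := by
  by_cases hz : ∀ᵐ x, u x = 0
  · have hint : ∫ x in Ω, |u x| ^ q = 0 :=
      integral_eq_zero_of_ae <| by
        filter_upwards [ae_restrict_of_ae hz] with x hx
        simp [hx, Real.zero_rpow hq]
    rw [_root_.lpNorm, hint, Real.zero_rpow (one_div_ne_zero hq)]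
    exact mul_nonneg hc (gNorm_nonneg u)
  · have hpos : 0 < gNorm K u := by
      refine (gNorm_nonneg u).lt_of_ne fun h0 =>
        hz (hu.ae_eq_zero_of_gInner_self_eq_zero hKpos hΩ ?_)
      rw [← gNorm_sq (fun x hx => (hKpos x hx).le), ← h0, sq, zero_mul]
    exact (div_le_iff₀ hpos).1 (hsob u hu hz)

theorem integral_abs_rpow_eq_lpNorm_rpow {q : ℝ} (hq : q ≠ 0) (u : EV n → ℝ) :
    ∫ x in Ω, |u x| ^ q = lpNorm Ω q u ^ q := by
  rw [_root_.lpNorm, one_div, Real.rpow_inv_rpow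
    (integral_nonneg fun x => Real.rpow_nonneg (abs_nonneg _) _) hq]

/-- The hypothesis `hsob` only controls a Bochner integral, which is `0` for non-integrable
functions; integrability of `|u|^q` comes from applying it to the bounded truncations of `u`
and monotone convergence. -/
theorem MemX0.integrableOn_rpow_and_integral_le [Nontrivial (EV n)]
    (hKpos : ∀ x, x ≠ 0 → 0 < K x)
    (hKm : AEStronglyMeasurable K volume) (hΩ : volume Ω ≠ ⊤) {q c : ℝ} (hq : 0 < q)
    (hc : 0 ≤ c) (hsob : ∀ w, MemX0 K Ω w → ¬ (∀ᵐ x, w x = 0) → lpNorm Ω q w / gNorm K w ≤ c)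
    (hu : MemX0 K Ω u) :
    IntegrableOn (fun x => |u x| ^ q) Ω ∧ ∫ x in Ω, |u x| ^ q ≤ (c * gNorm K u) ^ q := by
  have hK0 : ∀ x, x ≠ 0 → 0 ≤ K x := fun x hx => (hKpos x hx).le
  have : IsFiniteMeasure (volume.restrict Ω) := isFiniteMeasure_restrict.2 hΩ
  have habs : ∀ (N : ℕ) x, |truncate N (u x)| = min |u x| N :=
    fun N x => abs_truncate N.cast_nonneg _
  refine integrable_and_integral_le_of_monotone (f := fun N x => |truncate N (u x)| ^ q)
    (fun N => ?_) (fun N x => by positivity) (fun x i j hij => ?_) (fun x => ?_) (fun N => ?_)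
  · refine Integrable.of_bound
      ((hu.comp_truncate hK0 hKm N.cast_nonneg).meas.abs.pow_const q).aestronglyMeasurable
      ((N : ℝ) ^ q) (ae_of_all _ fun x => ?_)
    rw [Real.norm_of_nonneg (by positivity), habs]
    exact Real.rpow_le_rpow (by positivity) (min_le_right _ _) hq.le
  · simp only [habs]
    exact Real.rpow_le_rpow (by positivity) (min_le_min_left _ (Nat.cast_le.2 hij)) hq.le
  · refine tendsto_atTop_of_eventually_const (i₀ := ⌈|u x|⌉₊) fun N hN => ?_
    rw [habs, min_eq_left ((Nat.le_ceil _).trans (Nat.cast_le.2 hN))]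
  · rw [integral_abs_rpow_eq_lpNorm_rpow hq.ne']
    refine Real.rpow_le_rpow (by unfold _root_.lpNorm; positivity) ?_ hq.le
    have hN := (hu.comp_truncate hK0 hKm N.cast_nonneg).lpNorm_le_mul_gNorm hKpos hΩ hq.ne' hc hsob
    exact hN.trans (mul_le_mul_of_nonneg_left (gNorm_truncate_le hK0 hKm hu N.cast_nonneg) hc)

end Gagliardo

theorem eventually_integral_abs_rpow_sub_le_of_tendsto_lpNorm_one {n : ℕ} {Ω : Set (EV n)}
    (hΩ : volume Ω ≠ ⊤) {q A ε : ℝ} (hq : 1 ≤ q) (hε : 0 < ε) {f : ℕ → EV n → ℝ}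
    {g : EV n → ℝ} (hfm : ∀ k, Measurable (f k)) (hgm : Measurable g)
    (hf : ∀ k, IntegrableOn (fun x => |f k x| ^ q) Ω)
    (hfg : ∀ k, IntegrableOn (fun x => |f k x - g x| ^ q) Ω)
    (hg : IntegrableOn (fun x => |g x| ^ q) Ω) (hA : ∀ k, ∫ x in Ω, |f k x - g x| ^ q ≤ A)
    (hlim : Tendsto (fun k => lpNorm Ω 1 (fun x => f k x - g x)) atTop (𝓝 0)) :
    ∀ᶠ k in atTop, (∫ x in Ω, |f k x| ^ q) - (∫ x in Ω, |f k x - g x| ^ q)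
      - ∫ x in Ω, |g x| ^ q ≤ ε := by
  have : IsFiniteMeasure (volume.restrict Ω) := isFiniteMeasure_restrict.2 hΩ
  refine eventually_integral_abs_rpow_sub_le_of_tendstoInMeasure hq hε hf hfg hg hA
    (tendstoInMeasure_of_tendsto_integral_abs_sub (fun k => (hfm k).aestronglyMeasurable)
      hgm.aestronglyMeasurable (fun k => integrable_of_integrable_abs_rpow hq
        ((hfm k).sub hgm).aestronglyMeasurable (hfg k)) ?_)
  simpa [_root_.lpNorm] using hlim

theorem two_lt_twoStar {n : ℕ} {s : ℝ} (hs : 0 < s) (hn : 2 * s < n) : 2 < twoStar n s := by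
  rw [twoStar, lt_div_iff₀ (by linarith)]
  linarith

theorem energyHat_sub_energyHat_ge {n : ℕ} {s : ℝ} {K : EV n → ℝ} {Ω : Set (EV n)}
    {u w : EV n → ℝ} (hK : ∀ x, x ≠ 0 → 0 ≤ K x) (hKm : AEStronglyMeasurable K volume)
    (hu : MemX0 K Ω u) (hw : MemX0 K Ω w) {c μ : ℝ} (hc : 0 ≤ c) (hμ : 0 ≤ μ)
    (hq : 0 < twoStar n s)
    (hsob : ∫ x in Ω, |u x - w x| ^ twoStar n s
      ≤ (c * gNorm K (fun x => u x - w x)) ^ twoStar n s) :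
    (1 / 2 - c ^ twoStar n s * μ / twoStar n s
        * gNorm K (fun x => u x - w x) ^ (twoStar n s - 2)) * gNorm K (fun x => u x - w x) ^ 2
      ≤ energyHat s K Ω μ u - energyHat s K Ω μ w - (gInner K u w - gInner K w w)
        + μ / twoStar n s * ((∫ x in Ω, |u x| ^ twoStar n s)
          - (∫ x in Ω, |u x - w x| ^ twoStar n s) - ∫ x in Ω, |w x| ^ twoStar n s) := by
  unfold energyHat
  set q := twoStar n s
  set t := gNorm K (fun x => u x - w x)
  have hexp := gInner_self_eq_sub hK hKm hu hw
  rw [← gNorm_sq hK u, ← gNorm_sq hK (fun x => u x - w x)] at hexp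
  rw [Real.mul_rpow hc (gNorm_nonneg _)] at hsob
  have hsob' := mul_le_mul_of_nonneg_left hsob (div_nonneg hμ hq.le)
  have hcoef : c ^ q * μ / q * t ^ q = μ / q * (c ^ q * t ^ q) := by ring
  rw [half_sub_mul_rpow_mul_sq (gNorm_nonneg _) hq.ne', hcoef]
  linarith [gNorm_sq hK w]

theorem energyHat_le_of_gNorm_le {n : ℕ} {s : ℝ} {K : EV n → ℝ} {Ω : Set (EV n)} {μ M : ℝ}
    {u : EV n → ℝ} (hμ : 0 ≤ μ) (hq : 0 ≤ twoStar n s) (hu : gNorm K u ≤ M) :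
    energyHat s K Ω μ u ≤ 1 / 2 * M ^ 2 := by
  unfold energyHat
  have : 0 ≤ ∫ x in Ω, |u x| ^ twoStar n s := integral_nonneg fun x => by positivity
  nlinarith [div_nonneg hμ hq, pow_le_pow_left₀ (gNorm_nonneg u) hu 2]

theorem statement6_general
    (n : ℕ) (s : ℝ) (hs : s ∈ Set.Ioo (0:ℝ) 1) (hn : 2 * s < n)
    (Ω : Set (EV n)) (hΩb : Bornology.IsBounded Ω)
    (K : EV n → ℝ)
    (hKpos : ∀ x : EV n, x ≠ 0 → 0 < K x)
    (hK1 : Integrable (fun x : EV n => min (‖x‖ ^ 2) 1 * K x))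
    (c : ℝ) (hc : 0 < c)
    (hclub : IsLUB {ρ : ℝ | ∃ u, MemX0 K Ω u ∧
        ¬ (∀ᵐ x ∂(volume : Measure (EV n)), u x = 0) ∧
        ρ = lpNorm Ω (twoStar n s) u / gNorm K u} c)
    (hcpt : ∀ (uj : ℕ → EV n → ℝ) (u : EV n → ℝ), (∀ j, MemX0 K Ω (uj j)) →
        MemX0 K Ω u → WeakConv K Ω uj u → ∀ p : ℝ, 1 ≤ p → p < twoStar n s →
        Tendsto (fun j => lpNorm Ω p (fun x => uj j x - u x)) atTop (𝓝 0))
    (μ : ℝ) (hμ : 0 < μ)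
    (uj : ℕ → EV n → ℝ) (uinf : EV n → ℝ)
    (hujX : ∀ j, MemX0 K Ω (uj j))
    (hbdd : ∃ M : ℝ, ∀ j, gNorm K (uj j) ≤ M)
    (huinfX : MemX0 K Ω uinf)
    (hweak : WeakConv K Ω uj uinf) :
    liminf (fun j =>
        (1 / 2 - c ^ twoStar n s * μ / twoStar n s *
            gNorm K (fun x => uj j x - uinf x) ^ (twoStar n s - 2)) *
          gNorm K (fun x => uj j x - uinf x) ^ 2) atTop ≤
      liminf (fun j => energyHat s K Ω μ (uj j) - energyHat s K Ω μ uinf) atTop := by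
  obtain ⟨M, hM⟩ := hbdd
  have hq : 2 < twoStar n s := two_lt_twoStar hs.1 hn
  have : NeZero n := ⟨by rintro rfl; simp at hn; linarith [hs.1]⟩
  have hΩ : volume Ω ≠ ⊤ := hΩb.measure_lt_top.ne
  have hKm := aestronglyMeasurable_of_integrable_min_sq_mul hK1
  have hK0 : ∀ x, x ≠ 0 → 0 ≤ K x := fun x hx => (hKpos x hx).le
  have hsob : ∀ u, MemX0 K Ω u → IntegrableOn (fun x => |u x| ^ twoStar n s) Ω ∧
      ∫ x in Ω, |u x| ^ twoStar n s ≤ (c * gNorm K u) ^ twoStar n s := fun u hu =>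
    hu.integrableOn_rpow_and_integral_le hKpos hKm hΩ (by linarith) hc.le
      fun w hw hw0 => hclub.1 ⟨w, hw, hw0, rfl⟩
  have hvX : ∀ j, MemX0 K Ω (fun x => uj j x - uinf x) := fun j => (hujX j).sub hK0 hKm huinfX
  have hvT : ∀ j, gNorm K (fun x => uj j x - uinf x) ≤ √2 * (M + gNorm K uinf) := fun j =>
    (gNorm_sub_le hK0 hKm (hujX j) huinfX).trans (by gcongr; exact hM j)
  have hBL : ∀ ε > 0, ∀ᶠ j in atTop, (∫ x in Ω, |uj j x| ^ twoStar n s)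
      - (∫ x in Ω, |uj j x - uinf x| ^ twoStar n s) - ∫ x in Ω, |uinf x| ^ twoStar n s ≤ ε :=
    fun ε hε => eventually_integral_abs_rpow_sub_le_of_tendsto_lpNorm_one hΩ (by linarith) hε
      (fun j => (hujX j).meas) huinfX.meas (fun j => (hsob _ (hujX j)).1)
      (fun j => (hsob _ (hvX j)).1) (hsob _ huinfX).1
      (fun j => (hsob _ (hvX j)).2.trans (Real.rpow_le_rpow
        (mul_nonneg hc.le (gNorm_nonneg _)) (mul_le_mul_of_nonneg_left (hvT j) hc.le)
        (by linarith)))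
      (hcpt uj uinf hujX huinfX hweak 1 le_rfl (by linarith))
  have hcross : Tendsto (fun j => gInner K (uj j) uinf - gInner K uinf uinf) atTop (𝓝 0) := by
    simpa using (hweak uinf huinfX).sub_const (gInner K uinf uinf)
  refine liminf_le_liminf_of_forall_eventually_le_add
    (isBoundedUnder_of ⟨_, fun j => neg_mul_rpow_le_half_sub_mul_rpow_mul_sq (gNorm_nonneg _)
      (hvT j) (by linarith) (by positivity)⟩)
    (isBoundedUnder_of ⟨_, fun j => sub_le_sub_right
      (energyHat_le_of_gNorm_le hμ.le (by linarith) (hM j)) _⟩) fun ε hε => ?_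
  have hq0 : 0 < twoStar n s := by linarith
  filter_upwards [hBL _ (by positivity : 0 < twoStar n s / μ * (ε / 2)),
    hcross.eventually (lt_mem_nhds (neg_lt_zero.2 (half_pos hε)))] with j hBLj hcj
  have := energyHat_sub_energyHat_ge hK0 hKm (hujX j) huinfX hc.le hμ.le hq0 (hsob _ (hvX j)).2
  have hμq : μ / twoStar n s * (twoStar n s / μ * (ε / 2)) = ε / 2 := by field_simp
  nlinarith [mul_le_mul_of_nonneg_left hBLj (div_nonneg hμ.le hq0.le)]

/-- **Key estimate in Lemma 3.2** (inequality (3.5) of the paper):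
for a bounded sequence `u_j ⇀ u_∞` in `X₀`,
`liminf (Ê_μ(u_j) − Ê_μ(u_∞)) ≥ liminf (1/2 − (c^{2*} μ/2*) ‖u_j−u_∞‖^{2*−2}) ‖u_j−u_∞‖²`. -/
theorem statement6
    (n : ℕ) (s : ℝ) (hs : s ∈ Set.Ioo (0:ℝ) 1) (hn : 2 * s < n)
    (Ω : Set (EV n)) (hΩo : IsOpen Ω) (hΩne : Ω.Nonempty) (hΩb : Bornology.IsBounded Ω)
    (K : EV n → ℝ)
    (hKpos : ∀ x : EV n, x ≠ 0 → 0 < K x)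
    (hK1 : Integrable (fun x : EV n => min (‖x‖ ^ 2) 1 * K x))
    (hK2 : ∃ k₀ > 0, ∀ x : EV n, x ≠ 0 → k₀ * ‖x‖ ^ (-((n : ℝ) + 2 * s)) ≤ K x)
    (c : ℝ) (hc : 0 < c)
    (hclub : IsLUB {ρ : ℝ | ∃ u, MemX0 K Ω u ∧
        ¬ (∀ᵐ x ∂(volume : Measure (EV n)), u x = 0) ∧
        ρ = lpNorm Ω (twoStar n s) u / gNorm K u} c)
    (hcpt : ∀ (uj : ℕ → EV n → ℝ) (u : EV n → ℝ), (∀ j, MemX0 K Ω (uj j)) →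
        MemX0 K Ω u → WeakConv K Ω uj u → ∀ p : ℝ, 1 ≤ p → p < twoStar n s →
        Tendsto (fun j => lpNorm Ω p (fun x => uj j x - u x)) atTop (𝓝 0))
    (μ : ℝ) (hμ : 0 < μ)
    (uj : ℕ → EV n → ℝ) (uinf : EV n → ℝ)
    (hujX : ∀ j, MemX0 K Ω (uj j))
    (hbdd : ∃ M : ℝ, ∀ j, gNorm K (uj j) ≤ M)
    (huinfX : MemX0 K Ω uinf)
    (hweak : WeakConv K Ω uj uinf) :
    liminf (fun j =>
        (1 / 2 - c ^ twoStar n s * μ / twoStar n s *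
            gNorm K (fun x => uj j x - uinf x) ^ (twoStar n s - 2)) *
          gNorm K (fun x => uj j x - uinf x) ^ 2) atTop ≤
      liminf (fun j => energyHat s K Ω μ (uj j) - energyHat s K Ω μ uinf) atTop :=
  statement6_general n s hs hn Ω hΩb K hKpos hK1 c hc hclub hcpt μ hμ uj uinf hujX hbdd huinfX hweak
end
end

section
/- Let λ,μ > 0 and let g : ℝ → ℝ be continuous satisfying (g1) with constants a₁,a₂ > 0 and q ∈ [1,2*). Define Ẽ_{λ,μ}(u) := (μ/2*)∫_Ω |u|^{2*} dx + λ∫_Ω G(u) dx, and for ρ > 0 and ε ∈ (0,ρ) set φ(ε,ρ) := ( sup_{B_c(0,ρ)} Ẽ_{λ,μ} − sup_{B_c(0,ρ−ε)} Ẽ_{λ,μ} ) / ε. Then limsup_{ε→0⁺} φ(ε,ρ) ≤ c_{2*}^{2*} μ ρ^{2*−1} + λ a₁ c_{2*} |Ω|^{(2*−1)/2*} + λ a₂ c_{2*}^{q} |Ω|^{(2*−q)/2*} ρ^{q−1}. -/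
open MeasureTheory Filter Topology Set

noncomputable section

/-!
Scaling by `t = (ρ - ε) / ρ` maps the ball `B(ρ)` of `X₀` into `B(ρ - ε)`, so
`sup_{B(ρ)} Ẽ - sup_{B(ρ-ε)} Ẽ ≤ sup_{u ∈ B(ρ)} (Ẽ(u) - Ẽ(t u))`. By Bernoulli's inequality
`1 - t^{2*} ≤ 2* (1 - t)` and the growth bound `|G(y) - G(t y)| ≤ (1 - t)(a₁|y| + a₂|y|^q)`, the
difference `Ẽ(u) - Ẽ(t u)` is at most `1 - t` times a combination of `∫|u|^{2*}`, `∫|u|` and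
`∫|u|^q`; the Sobolev and Hölder inequalities bound these through `‖u‖ ≤ ρ`, and `(1 - t)ρ = ε`.

The Sobolev inequality `∫_Ω |u|^{2*} ≤ (c ‖u‖)^{2*}` has to be extracted from `c` being an upper
bound of the ratios `‖u‖_{2*} / ‖u‖`, whose Bochner integrals are junk unless `|u|^{2*}` is
integrable. It holds for the bounded truncations of `u`, which stay in `X₀` with smaller norm
since truncation is a normal contraction, and passes to `u` by monotone convergence.
-/

lemma rpow_sub_one_mul_self {x y : ℝ} (hx : 0 ≤ x) (hy : y ≠ 0) : x ^ (y - 1) * x = x ^ y := by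
  rw [← Real.rpow_add_one' hx (by simpa), sub_add_cancel]

lemma one_sub_rpow_le_mul {t P : ℝ} (ht : 0 ≤ t) (hP : 1 ≤ P) : 1 - t ^ P ≤ P * (1 - t) := by
  have h := one_add_mul_self_le_rpow_one_add (s := t - 1) (by linarith) hP
  rw [add_sub_cancel] at h
  linarith

lemma abs_intervalIntegral_mul_le {g : ℝ → ℝ} {a₁ a₂ q : ℝ} (ha₂ : 0 ≤ a₂) (hq : 1 ≤ q)
    (hg : ∀ τ, |g τ| ≤ a₁ + a₂ * |τ| ^ (q - 1)) {t : ℝ} (ht0 : 0 ≤ t) (ht1 : t ≤ 1) (y : ℝ) :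
    |∫ τ in (t * y)..y, g τ| ≤ (1 - t) * (a₁ * |y| + a₂ * |y| ^ q) := by
  have hty : |t * y| ≤ |y| := by
    rw [abs_mul, abs_of_nonneg ht0]
    exact mul_le_of_le_one_left (abs_nonneg y) ht1
  have hbound : ∀ τ ∈ uIoc (t * y) y, ‖g τ‖ ≤ a₁ + a₂ * |y| ^ (q - 1) := fun τ hτ => by
    have hτy : |τ| ≤ |y| :=
      abs_le.mpr (uIcc_subset_Icc (abs_le.mp hty) (abs_le.mp le_rfl) (uIoc_subset_uIcc hτ))
    exact (hg τ).trans (by gcongr)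
  have hlen : |y - t * y| = (1 - t) * |y| := by
    rw [← one_sub_mul, abs_mul, abs_of_nonneg (by linarith)]
  calc |∫ τ in (t * y)..y, g τ| ≤ (a₁ + a₂ * |y| ^ (q - 1)) * |y - t * y| :=
        intervalIntegral.norm_integral_le_of_norm_le_const hbound
    _ = (1 - t) * (a₁ * |y| + a₂ * (|y| ^ (q - 1) * |y|)) := by rw [hlen]; ring
    _ = (1 - t) * (a₁ * |y| + a₂ * |y| ^ q) := by
        rw [rpow_sub_one_mul_self (abs_nonneg y) (by linarith)]

lemma csSup_image_le_csSup_image_add {α : Type*} {F : α → ℝ} {A B : Set α} {f : α → α}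
    {δ : ℝ} (hA : A.Nonempty) (hB : BddAbove (F '' B)) (hf : MapsTo f A B)
    (h : ∀ u ∈ A, F u ≤ F (f u) + δ) : sSup (F '' A) ≤ sSup (F '' B) + δ := by
  refine csSup_le (hA.image F) ?_
  rintro _ ⟨u, hu, rfl⟩
  exact (h u hu).trans (add_le_add_left (le_csSup hB (mem_image_of_mem F (hf hu))) δ)

lemma limsup_sub_div_le {S : ℝ → ℝ} {ρ R : ℝ} (hρ : 0 < ρ)
    (hmono : ∀ ε ∈ Ioo 0 ρ, S (ρ - ε) ≤ S ρ) (hinc : ∀ ε ∈ Ioo 0 ρ, S ρ ≤ S (ρ - ε) + ε * R) :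
    limsup (fun ε => (S ρ - S (ρ - ε)) / ε) (𝓝[>] 0) ≤ R := by
  have hnhds : Ioo 0 ρ ∈ 𝓝[>] (0 : ℝ) := Ioo_mem_nhdsGT hρ
  refine limsup_le_of_le (isCoboundedUnder_le_of_eventually_le _ (x := 0) ?_) ?_
  · filter_upwards [hnhds] with ε hε
    exact div_nonneg (sub_nonneg.mpr (hmono ε hε)) hε.1.le
  · filter_upwards [hnhds] with ε hε
    rw [div_le_iff₀ hε.1]
    linarith [hinc ε hε]

lemma integrable_abs_rpow_and_integral_le_of_min_le {α : Type*} [MeasurableSpace α]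
    {μ : Measure α} [IsFiniteMeasure μ] {f : α → ℝ} (hf : AEStronglyMeasurable f μ) {P C : ℝ}
    (hP : 0 < P) (h : ∀ m : ℕ, ∫ x, min |f x| m ^ P ∂μ ≤ C) :
    Integrable (fun x => |f x| ^ P) μ ∧ ∫ x, |f x| ^ P ∂μ ≤ C := by
  have hC : 0 ≤ C := (integral_nonneg fun x => by positivity).trans (h 0)
  have hmin : ∀ m : ℕ, Integrable (fun x => min |f x| m ^ P) μ := fun m =>
    .of_bound ((hf.aemeasurable.abs.min aemeasurable_const).pow_const P).aestronglyMeasurable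
      ((m : ℝ) ^ P) (Eventually.of_forall fun x => by
        rw [Real.norm_of_nonneg (by positivity)]
        exact Real.rpow_le_rpow (by positivity) (min_le_right _ _) hP.le)
  have hmono : ∀ x, Monotone fun m : ℕ => ENNReal.ofReal (min |f x| m ^ P) := fun x a b hab =>
    ENNReal.ofReal_le_ofReal <| Real.rpow_le_rpow (by positivity)
      (min_le_min_left _ (Nat.cast_le.mpr hab)) hP.le
  have hlim : ∀ x, Tendsto (fun m : ℕ => ENNReal.ofReal (min |f x| m ^ P)) atTop
      (𝓝 (ENNReal.ofReal (|f x| ^ P))) := fun x => by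
    obtain ⟨m₀, hm₀⟩ := exists_nat_ge |f x|
    refine tendsto_atTop_of_eventually_const (i₀ := m₀) fun m hm => ?_
    rw [min_eq_left (hm₀.trans (Nat.cast_le.mpr hm))]
  have hlint : ∫⁻ x, ENNReal.ofReal (|f x| ^ P) ∂μ ≤ ENNReal.ofReal C := by
    refine le_of_tendsto' (lintegral_tendsto_of_tendsto_of_monotone
      (fun m => (hmin m).aemeasurable.ennreal_ofReal) (ae_of_all _ hmono) (ae_of_all _ hlim))
      fun m => ?_
    rw [← ofReal_integral_eq_lintegral_ofReal (hmin m) (ae_of_all _ fun x => by positivity)]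
    exact ENNReal.ofReal_le_ofReal (h m)
  have hnn : 0 ≤ᵐ[μ] fun x => |f x| ^ P := ae_of_all _ fun x => by positivity
  have hmeas : AEStronglyMeasurable (fun x => |f x| ^ P) μ :=
    (hf.aemeasurable.abs.pow_const P).aestronglyMeasurable
  refine ⟨⟨hmeas, (hasFiniteIntegral_iff_ofReal hnn).mpr
    (hlint.trans_lt ENNReal.ofReal_lt_top)⟩, ?_⟩
  rw [integral_eq_lintegral_of_nonneg_ae hnn hmeas]
  exact ENNReal.toReal_le_of_le_ofReal hC hlint

lemma integrable_abs_rpow_and_integral_le_of_lt {α : Type*} [MeasurableSpace α] {μ : Measure α}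
    [IsFiniteMeasure μ] {f : α → ℝ} (hf : AEStronglyMeasurable f μ) {r P : ℝ} (hr : 0 < r)
    (hrP : r < P) (hI : Integrable (fun x => |f x| ^ P) μ) :
    Integrable (fun x => |f x| ^ r) μ ∧
      ∫ x, |f x| ^ r ∂μ ≤ (∫ x, |f x| ^ P ∂μ) ^ (r / P) * μ.real univ ^ ((P - r) / P) := by
  have hP : 0 < P := hr.trans hrP
  have hfP : MemLp f (ENNReal.ofReal P) μ := by
    refine (integrable_norm_rpow_iff hf (by simpa using hP) ENNReal.ofReal_ne_top).mp ?_
    simpa [ENNReal.toReal_ofReal hP.le] using hI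
  have hfr : MemLp (fun x => |f x| ^ r) (ENNReal.ofReal (P / r)) μ := by
    have := hfP.norm_rpow_div (ENNReal.ofReal r)
    rwa [ENNReal.toReal_ofReal hr.le, ← ENNReal.ofReal_div_of_pos hr] at this
  have hconj : (P / r).HolderConjugate (P / (P - r)) := by
    rw [Real.holderConjugate_iff]
    refine ⟨(one_lt_div hr).mpr hrP, ?_⟩
    field_simp
    ring
  have hint : Integrable (fun x => |f x| ^ r) μ :=
    hfr.integrable (by rw [ENNReal.one_le_ofReal]; exact (one_lt_div hr).mpr hrP |>.le)
  refine ⟨hint, ?_⟩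
  have h := integral_mul_le_Lp_mul_Lq_of_nonneg hconj
    (Eventually.of_forall fun x => by positivity) (Eventually.of_forall fun _ => zero_le_one)
    hfr (memLp_const (1 : ℝ))
  have hpow : ∀ x, (|f x| ^ r) ^ (P / r) = |f x| ^ P := fun x => by
    rw [← Real.rpow_mul (abs_nonneg _), mul_div_cancel₀ _ hr.ne']
  simpa [hpow, one_div_div] using h

lemma integral_abs_rpow_sub_integral_abs_mul_rpow_le {α : Type*} [MeasurableSpace α]
    {μ : Measure α} {f : α → ℝ} {P t B : ℝ} (hP : 1 ≤ P) (ht0 : 0 ≤ t) (ht1 : t ≤ 1)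
    (hB : ∫ x, |f x| ^ P ∂μ ≤ B) :
    ∫ x, |f x| ^ P ∂μ - ∫ x, |t * f x| ^ P ∂μ ≤ P * (1 - t) * B := by
  have hscale : ∫ x, |t * f x| ^ P ∂μ = t ^ P * ∫ x, |f x| ^ P ∂μ := by
    rw [← integral_const_mul]
    congr 1 with x
    rw [abs_mul, abs_of_nonneg ht0, Real.mul_rpow ht0 (abs_nonneg _)]
  have hA : 0 ≤ ∫ x, |f x| ^ P ∂μ := integral_nonneg fun x => by positivity
  calc ∫ x, |f x| ^ P ∂μ - ∫ x, |t * f x| ^ P ∂μ = (1 - t ^ P) * ∫ x, |f x| ^ P ∂μ := by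
        rw [hscale]; ring
    _ ≤ P * (1 - t) * B :=
        mul_le_mul (one_sub_rpow_le_mul ht0 hP) hB hA (mul_nonneg (by linarith) (by linarith))

section Primitive

variable {α : Type*} [MeasurableSpace α] {μ : Measure α} {g : ℝ → ℝ} {a₁ a₂ q : ℝ}
  (hgc : Continuous g) (ha₂ : 0 ≤ a₂) (hq : 1 ≤ q) (hg : ∀ τ, |g τ| ≤ a₁ + a₂ * |τ| ^ (q - 1))
  {f : α → ℝ} (hf : AEStronglyMeasurable f μ) (hf1 : Integrable (fun x => |f x|) μ)
  (hfq : Integrable (fun x => |f x| ^ q) μ)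
include hgc ha₂ hq hg hf hf1 hfq

lemma integrable_primitive_comp : Integrable (fun x => ∫ τ in (0 : ℝ)..f x, g τ) μ := by
  have hG : Continuous fun y => ∫ τ in (0 : ℝ)..y, g τ :=
    intervalIntegral.continuous_primitive (fun a b => hgc.intervalIntegrable a b) 0
  refine ((hf1.const_mul a₁).add (hfq.const_mul a₂)).mono' (hG.comp_aestronglyMeasurable hf)
    (ae_of_all _ fun x => ?_)
  simpa using abs_intervalIntegral_mul_le ha₂ hq hg le_rfl zero_le_one (f x)

lemma integral_primitive_sub_integral_primitive_mul_le {t : ℝ} (ht0 : 0 ≤ t) (ht1 : t ≤ 1) :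
    ∫ x, (∫ τ in (0 : ℝ)..f x, g τ) ∂μ - ∫ x, (∫ τ in (0 : ℝ)..(t * f x), g τ) ∂μ
      ≤ (1 - t) * (a₁ * (∫ x, |f x| ∂μ) + a₂ * ∫ x, |f x| ^ q ∂μ) := by
  have htf1 : Integrable (fun x => |t * f x|) μ := by
    simpa only [abs_mul] using hf1.const_mul |t|
  have htfq : Integrable (fun x => |t * f x| ^ q) μ := by
    simpa only [abs_mul, Real.mul_rpow (abs_nonneg t) (abs_nonneg _)] using hfq.const_mul (|t| ^ q)
  have hG := integrable_primitive_comp hgc ha₂ hq hg hf hf1 hfq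
  have hGt := integrable_primitive_comp hgc ha₂ hq hg (hf.const_mul t) htf1 htfq
  have hf1q := (hf1.const_mul a₁).add (hfq.const_mul a₂)
  calc ∫ x, (∫ τ in (0 : ℝ)..f x, g τ) ∂μ - ∫ x, (∫ τ in (0 : ℝ)..(t * f x), g τ) ∂μ
      = ∫ x, ((∫ τ in (0 : ℝ)..f x, g τ) - ∫ τ in (0 : ℝ)..(t * f x), g τ) ∂μ :=
        (integral_sub hG hGt).symm
    _ ≤ ∫ x, (1 - t) * (a₁ * |f x| + a₂ * |f x| ^ q) ∂μ := by
        refine integral_mono (hG.sub hGt) (hf1q.const_mul (1 - t)) fun x => ?_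
        rw [intervalIntegral.integral_interval_sub_left (hgc.intervalIntegrable _ _)
          (hgc.intervalIntegrable _ _)]
        exact (le_abs_self _).trans (abs_intervalIntegral_mul_le ha₂ hq hg ht0 ht1 (f x))
    _ = (1 - t) * (a₁ * (∫ x, |f x| ∂μ) + a₂ * ∫ x, |f x| ^ q ∂μ) := by
        rw [integral_const_mul, integral_add (hf1.const_mul a₁) (hfq.const_mul a₂),
          integral_const_mul, integral_const_mul]

end Primitive

section X0

variable {n : ℕ} {K : EV n → ℝ} {Ω : Set (EV n)}

lemma gInner_self_eq (u : EV n → ℝ) :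
    gInner K u u = ∫ p : EV n × EV n, (u p.1 - u p.2) ^ 2 * K (p.1 - p.2) := by
  simp only [gInner, sq]

lemma sq_sub_mul_kernel_nonneg (hKpos : ∀ x : EV n, x ≠ 0 → 0 < K x) (u : EV n → ℝ)
    (p : EV n × EV n) : 0 ≤ (u p.1 - u p.2) ^ 2 * K (p.1 - p.2) := by
  rcases eq_or_ne p.1 p.2 with h | h
  · simp [h]
  · exact mul_nonneg (sq_nonneg _) (hKpos _ (sub_ne_zero.mpr h)).le

lemma MemX0.comp_lipschitzWith (hKpos : ∀ x : EV n, x ≠ 0 → 0 < K x) {u : EV n → ℝ}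
    (hu : MemX0 K Ω u) {φ : ℝ → ℝ} (hφ : LipschitzWith 1 φ) (hφ0 : φ 0 = 0) :
    MemX0 K Ω (φ ∘ u) ∧ gNorm K (φ ∘ u) ≤ gNorm K u := by
  have hlip : ∀ p : EV n × EV n, |φ (u p.1) - φ (u p.2)| ≤ |u p.1 - u p.2| := fun p => by
    simpa [Real.dist_eq] using hφ.dist_le_mul (u p.1) (u p.2)
  have hle : ∀ p : EV n × EV n, (φ (u p.1) - φ (u p.2)) ^ 2 * K (p.1 - p.2)
      ≤ (u p.1 - u p.2) ^ 2 * K (p.1 - p.2) := fun p => by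
    rcases eq_or_ne p.1 p.2 with h | h
    · simp [h]
    · exact mul_le_mul_of_nonneg_right (sq_le_sq.mpr (hlip p)) (hKpos _ (sub_ne_zero.mpr h)).le
  -- `K` itself need not be measurable: the new integrand is a measurable multiple of the old one
  -- (with `0 / 0 = 0` on the set where `u p.1 = u p.2`, where both integrands vanish).
  have hratio : (fun p : EV n × EV n => (φ (u p.1) - φ (u p.2)) ^ 2 * K (p.1 - p.2))
      = fun p => (φ (u p.1) - φ (u p.2)) ^ 2 / (u p.1 - u p.2) ^ 2
          * ((u p.1 - u p.2) ^ 2 * K (p.1 - p.2)) := funext fun p => by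
    by_cases h : u p.1 - u p.2 = 0
    · have hφp := hlip p
      rw [h, abs_zero, abs_nonpos_iff] at hφp
      simp [h, hφp]
    · field_simp
  have hφm : Measurable (φ ∘ u) := hφ.continuous.measurable.comp hu.meas
  have hmeas : AEStronglyMeasurable
      (fun p : EV n × EV n => (φ (u p.1) - φ (u p.2)) ^ 2 * K (p.1 - p.2)) volume := by
    rw [hratio]
    have hdiff : ∀ {v : EV n → ℝ}, Measurable v → Measurable fun p : EV n × EV n => v p.1 - v p.2 :=
      fun hv => (hv.comp measurable_fst).sub (hv.comp measurable_snd)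
    exact (((hdiff hφm).pow_const 2).div ((hdiff hu.meas).pow_const 2)).aestronglyMeasurable.mul
      hu.fin.aestronglyMeasurable
  have hint : Integrable (fun p : EV n × EV n => (φ (u p.1) - φ (u p.2)) ^ 2 * K (p.1 - p.2)) :=
    hu.fin.mono' hmeas (ae_of_all _ fun p =>
      (Real.norm_of_nonneg (sq_sub_mul_kernel_nonneg hKpos (φ ∘ u) p)).trans_le (hle p))
  refine ⟨⟨hφm, ?_, hint⟩, Real.sqrt_le_sqrt ?_⟩
  · filter_upwards [hu.zero] with x hx hxΩ
    simp [hx hxΩ, hφ0]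
  · rw [gInner_self_eq, gInner_self_eq]
    exact integral_mono hint hu.fin hle

lemma MemX0.const_mul {u : EV n → ℝ} (hu : MemX0 K Ω u) (t : ℝ) :
    MemX0 K Ω (fun x => t * u x) := by
  refine ⟨hu.meas.const_mul t, ?_, ?_⟩
  · filter_upwards [hu.zero] with x hx hxΩ
    rw [hx hxΩ, mul_zero]
  · convert hu.fin.const_mul (t ^ 2) using 2
    ring

lemma gNorm_const_mul (u : EV n → ℝ) (t : ℝ) :
    gNorm K (fun x => t * u x) = |t| * gNorm K u := by
  have h : gInner K (fun x => t * u x) (fun x => t * u x) = t ^ 2 * gInner K u u := by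
    rw [gInner, gInner, ← integral_const_mul]
    congr 1 with p
    ring
  rw [gNorm, gNorm, h, Real.sqrt_mul (sq_nonneg t), Real.sqrt_sq_eq_abs]

lemma memX0_zero : MemX0 K Ω (fun _ => 0) :=
  ⟨measurable_const, ae_of_all _ fun _ _ => rfl, by simp⟩

lemma gNorm_zero : gNorm K (fun _ : EV n => (0 : ℝ)) = 0 := by
  simp [gNorm, gInner]

def ballX0 (K : EV n → ℝ) (Ω : Set (EV n)) (r : ℝ) : Set (EV n → ℝ) :=
  {u | MemX0 K Ω u ∧ gNorm K u ≤ r}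

lemma zero_mem_ballX0 {r : ℝ} (hr : 0 ≤ r) : (fun _ => 0) ∈ ballX0 K Ω r :=
  ⟨memX0_zero, gNorm_zero.trans_le hr⟩

lemma ballX0_mono {r r' : ℝ} (h : r ≤ r') : ballX0 K Ω r ⊆ ballX0 K Ω r' :=
  fun _ hu => ⟨hu.1, hu.2.trans h⟩

lemma limsup_sSup_image_ballX0_le {E : (EV n → ℝ) → ℝ} {ρ R : ℝ} (hρ : 0 < ρ)
    (hE0 : E (fun _ => 0) = 0)
    (hE : ∀ u ∈ ballX0 K Ω ρ, ∀ t ∈ Icc (0 : ℝ) 1, E u ≤ E (fun x => t * u x) + (1 - t) * ρ * R) :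
    limsup (fun ε => (sSup (E '' ballX0 K Ω ρ) - sSup (E '' ballX0 K Ω (ρ - ε))) / ε)
      (𝓝[>] 0) ≤ R := by
  have hbdd : BddAbove (E '' ballX0 K Ω ρ) := by
    refine ⟨ρ * R, ?_⟩
    rintro _ ⟨u, hu, rfl⟩
    simpa [hE0] using hE u hu 0 ⟨le_rfl, zero_le_one⟩
  refine limsup_sub_div_le (S := fun r => sSup (E '' ballX0 K Ω r)) hρ (fun ε hε => ?_)
    (fun ε hε => ?_)
  · exact csSup_le_csSup hbdd ⟨_, mem_image_of_mem E (zero_mem_ballX0 (by linarith [hε.2]))⟩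
      (image_mono (ballX0_mono (by linarith [hε.1])))
  set t := (ρ - ε) / ρ
  have ht : t ∈ Icc (0 : ℝ) 1 :=
    ⟨div_nonneg (by linarith [hε.2]) hρ.le, (div_le_one hρ).mpr (by linarith [hε.1])⟩
  have htρ : t * ρ = ρ - ε := div_mul_cancel₀ _ hρ.ne'
  have hmaps : MapsTo (fun u x => t * u x) (ballX0 K Ω ρ) (ballX0 K Ω (ρ - ε)) := fun u hu => by
    refine ⟨hu.1.const_mul t, ?_⟩
    rw [gNorm_const_mul, abs_of_nonneg ht.1, ← htρ]
    exact mul_le_mul_of_nonneg_left hu.2 ht.1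
  have htε : (1 - t) * ρ = ε := by linarith
  exact csSup_image_le_csSup_image_add ⟨_, zero_mem_ballX0 hρ.le⟩
    (hbdd.mono (image_mono (ballX0_mono (by linarith [hε.1])))) hmaps
    fun u hu => htε ▸ hE u hu t ht

end X0

section Sobolev

variable {n : ℕ} {K : EV n → ℝ} {Ω : Set (EV n)}

lemma volume_diagonal_eq_zero (hn : 0 < n) :
    (volume : Measure (EV n × EV n)) {p | p.1 = p.2} = 0 := by
  have : NeZero n := ⟨hn.ne'⟩
  have hdiag : {p : EV n × EV n | p.1 = p.2} = (fun p : EV n × EV n => p.1 - p.2) ⁻¹' {0} := by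
    ext p
    simp [sub_eq_zero]
  rw [hdiag, Measure.volume_eq_prod]
  exact (quasiMeasurePreserving_sub volume volume).preimage_null (measure_singleton 0)

lemma volume_compl_ne_zero (hn : 0 < n) (hΩb : Bornology.IsBounded Ω) :
    (volume : Measure (EV n)) Ωᶜ ≠ 0 := fun h => by
  have : NeZero n := ⟨hn.ne'⟩
  have hle := measure_union_le (μ := (volume : Measure (EV n))) Ω Ωᶜ
  rw [union_compl_self, measure_univ_of_isAddLeftInvariant, h, add_zero] at hle
  exact hΩb.measure_lt_top.not_ge hle

lemma ae_eq_zero_of_gNorm_eq_zero (hn : 0 < n) (hΩb : Bornology.IsBounded Ω)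
    (hKpos : ∀ x : EV n, x ≠ 0 → 0 < K x) {u : EV n → ℝ} (hu : MemX0 K Ω u)
    (h0 : gNorm K u = 0) : ∀ᵐ x ∂(volume : Measure (EV n)), u x = 0 := by
  have hI : ∫ p : EV n × EV n, (u p.1 - u p.2) ^ 2 * K (p.1 - p.2) = 0 := by
    rw [← gInner_self_eq]
    refine le_antisymm (Real.sqrt_eq_zero'.mp h0) ?_
    rw [gInner_self_eq]
    exact integral_nonneg (sq_sub_mul_kernel_nonneg hKpos u)
  have hconst : ∀ᵐ p : EV n × EV n, u p.1 = u p.2 := by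
    have hoff : ∀ᵐ p : EV n × EV n, p.1 ≠ p.2 := measure_eq_zero_iff_ae_notMem.mp
      (volume_diagonal_eq_zero hn)
    filter_upwards [(integral_eq_zero_iff_of_nonneg (sq_sub_mul_kernel_nonneg hKpos u)
      hu.fin).mp hI, hoff] with p hp hne
    have hK := (hKpos _ (sub_ne_zero.mpr hne)).ne'
    simpa [hK, sub_eq_zero] using hp
  rw [Measure.volume_eq_prod] at hconst
  filter_upwards [Measure.ae_ae_of_ae_prod hconst] with x hx
  -- `u` is a.e. equal to `u x`, and it vanishes on `Ωᶜ`, which is not null.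
  by_contra hux
  refine volume_compl_ne_zero hn hΩb (measure_mono_null (fun y hy => ?_) (hx.and hu.zero))
  rintro ⟨hxy, hy0⟩
  exact hux (hxy.trans (hy0 hy))

def sobolevRatios (K : EV n → ℝ) (Ω : Set (EV n)) (P : ℝ) : Set ℝ :=
  {ρ : ℝ | ∃ u, MemX0 K Ω u ∧ ¬ (∀ᵐ x ∂(volume : Measure (EV n)), u x = 0) ∧
    ρ = lpNorm Ω P u / gNorm K u}

variable (hn : 0 < n) (hΩb : Bornology.IsBounded Ω) (hKpos : ∀ x : EV n, x ≠ 0 → 0 < K x)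
  {P c : ℝ} (hP : 0 < P) (hc : 0 ≤ c) (hsob : c ∈ upperBounds (sobolevRatios K Ω P))
include hn hΩb hKpos hP hc hsob

/-- No integrability is needed: if `|u| ^ P` is not integrable, the left side is `0`. -/
lemma setIntegral_abs_rpow_le_of_mem_upperBounds {u : EV n → ℝ} (hu : MemX0 K Ω u) :
    ∫ x in Ω, |u x| ^ P ≤ (c * gNorm K u) ^ P := by
  have hI : 0 ≤ ∫ x in Ω, |u x| ^ P := integral_nonneg fun x => by positivity
  by_cases hz : ∀ᵐ x ∂(volume : Measure (EV n)), u x = 0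
  · have h0 : ∫ x in Ω, |u x| ^ P = 0 := integral_eq_zero_of_ae <| ae_restrict_of_ae <|
      hz.mono fun x hx => by simp [hx, Real.zero_rpow hP.ne']
    rw [h0]
    exact Real.rpow_nonneg (mul_nonneg hc (Real.sqrt_nonneg _)) P
  have hpos : 0 < gNorm K u := (Real.sqrt_nonneg _).lt_of_ne' fun h =>
    hz (ae_eq_zero_of_gNorm_eq_zero hn hΩb hKpos hu h)
  have hlp : lpNorm Ω P u ≤ c * gNorm K u := (div_le_iff₀ hpos).mp (hsob ⟨u, hu, hz, rfl⟩)
  calc ∫ x in Ω, |u x| ^ P = lpNorm Ω P u ^ P := by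
        unfold _root_.lpNorm
        rw [← Real.rpow_mul hI, one_div_mul_cancel hP.ne', Real.rpow_one]
    _ ≤ (c * gNorm K u) ^ P := Real.rpow_le_rpow (Real.rpow_nonneg hI _) hlp hP.le

lemma integrableOn_abs_rpow_and_setIntegral_le {u : EV n → ℝ} (hu : MemX0 K Ω u) {ρ : ℝ}
    (hgu : gNorm K u ≤ ρ) :
    IntegrableOn (fun x => |u x| ^ P) Ω ∧ ∫ x in Ω, |u x| ^ P ≤ (c * ρ) ^ P := by
  have : IsFiniteMeasure (volume.restrict Ω) :=
    isFiniteMeasure_restrict.mpr hΩb.measure_lt_top.ne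
  refine integrable_abs_rpow_and_integral_le_of_min_le hu.meas.aestronglyMeasurable hP
    fun m => ?_
  have hm : (0 : ℝ) ≤ m := m.cast_nonneg
  set φ : ℝ → ℝ := fun a => max (min a (m : ℝ)) (-m)
  have habs : ∀ a : ℝ, min |a| (m : ℝ) = |φ a| := fun a => by grind [abs_of_nonneg, abs_of_nonpos]
  obtain ⟨hφu, hφle⟩ := hu.comp_lipschitzWith hKpos (φ := φ)
    ((LipschitzWith.id.min_const _).max_const _) (by simp [φ])
  simp_rw [habs]
  calc ∫ x in Ω, |φ (u x)| ^ P ≤ (c * gNorm K (φ ∘ u)) ^ P :=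
        setIntegral_abs_rpow_le_of_mem_upperBounds hn hΩb hKpos hP hc hsob hφu
    _ ≤ (c * ρ) ^ P :=
        Real.rpow_le_rpow (mul_nonneg hc (Real.sqrt_nonneg _))
          (by gcongr; exact hφle.trans hgu) hP.le

lemma integrableOn_abs_rpow_and_setIntegral_le_of_lt {r : ℝ} (hr : 0 < r) (hrP : r < P)
    {u : EV n → ℝ} (hu : MemX0 K Ω u) {ρ : ℝ} (hgu : gNorm K u ≤ ρ) :
    IntegrableOn (fun x => |u x| ^ r) Ω ∧
      ∫ x in Ω, |u x| ^ r ≤ (volume Ω).toReal ^ ((P - r) / P) * (c * ρ) ^ r := by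
  have : IsFiniteMeasure (volume.restrict Ω) :=
    isFiniteMeasure_restrict.mpr hΩb.measure_lt_top.ne
  obtain ⟨hIP, hBP⟩ := integrableOn_abs_rpow_and_setIntegral_le hn hΩb hKpos hP hc hsob hu hgu
  have hcρ : 0 ≤ c * ρ := mul_nonneg hc ((Real.sqrt_nonneg _).trans hgu)
  obtain ⟨hIr, hBr⟩ :=
    integrable_abs_rpow_and_integral_le_of_lt hu.meas.aestronglyMeasurable hr hrP hIP
  refine ⟨hIr, hBr.trans ?_⟩
  rw [measureReal_restrict_apply_univ, mul_comm]
  calc (volume Ω).toReal ^ ((P - r) / P) * (∫ x in Ω, |u x| ^ P) ^ (r / P)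
      ≤ (volume Ω).toReal ^ ((P - r) / P) * ((c * ρ) ^ P) ^ (r / P) := by
        gcongr
    _ = (volume Ω).toReal ^ ((P - r) / P) * (c * ρ) ^ r := by
        rw [← Real.rpow_mul hcρ, mul_div_cancel₀ _ hP.ne']

end Sobolev

section Energy

variable {n : ℕ} {K : EV n → ℝ} {Ω : Set (EV n)} {s μ lam : ℝ} {g : ℝ → ℝ}

lemma energyTilde_zero (hP : twoStar n s ≠ 0) :
    energyTilde s K Ω μ lam g (fun _ => 0) = 0 := by
  simp [energyTilde, Real.zero_rpow hP]

lemma energyTilde_le_energyTilde_const_mul_add (hn : 0 < n) (hΩb : Bornology.IsBounded Ω)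
    (hKpos : ∀ x : EV n, x ≠ 0 → 0 < K x) {c : ℝ} (hc : 0 ≤ c)
    (hsob : c ∈ upperBounds (sobolevRatios K Ω (twoStar n s))) (hμ : 0 ≤ μ) (hlam : 0 ≤ lam)
    (hgc : Continuous g) {a₁ a₂ q : ℝ} (ha₁ : 0 ≤ a₁) (ha₂ : 0 ≤ a₂) (hq₁ : 1 ≤ q)
    (hq₂ : q < twoStar n s) (hg : ∀ τ, |g τ| ≤ a₁ + a₂ * |τ| ^ (q - 1)) {ρ : ℝ} (hρ : 0 ≤ ρ)
    {u : EV n → ℝ} (hu : MemX0 K Ω u) (hgu : gNorm K u ≤ ρ) {t : ℝ} (ht0 : 0 ≤ t)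
    (ht1 : t ≤ 1) :
    energyTilde s K Ω μ lam g u ≤ energyTilde s K Ω μ lam g (fun x => t * u x) +
      (1 - t) * ρ * (c ^ twoStar n s * μ * ρ ^ (twoStar n s - 1) +
        lam * a₁ * c * (volume Ω).toReal ^ ((twoStar n s - 1) / twoStar n s) +
        lam * a₂ * c ^ q * (volume Ω).toReal ^ ((twoStar n s - q) / twoStar n s)
          * ρ ^ (q - 1)) := by
  simp only [energyTilde]
  set P := twoStar n s
  set V := (volume Ω).toReal
  have hP : 1 < P := hq₁.trans_lt hq₂
  obtain ⟨-, hAP⟩ := integrableOn_abs_rpow_and_setIntegral_le hn hΩb hKpos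
    (by linarith) hc hsob hu hgu
  obtain ⟨hI1, hB1⟩ := integrableOn_abs_rpow_and_setIntegral_le_of_lt hn hΩb hKpos
    (by linarith) hc hsob one_pos hP hu hgu
  obtain ⟨hIq, hBq⟩ := integrableOn_abs_rpow_and_setIntegral_le_of_lt hn hΩb hKpos
    (by linarith) hc hsob (by linarith) hq₂ hu hgu
  simp only [Real.rpow_one] at hI1 hB1
  have hpowPart : μ / P * ((∫ x in Ω, |u x| ^ P) - ∫ x in Ω, |t * u x| ^ P)
      ≤ (1 - t) * μ * (c * ρ) ^ P :=
    calc _ ≤ μ / P * (P * (1 - t) * (c * ρ) ^ P) := mul_le_mul_of_nonneg_left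
          (integral_abs_rpow_sub_integral_abs_mul_rpow_le hP.le ht0 ht1 hAP)
          (div_nonneg hμ (by linarith))
      _ = (1 - t) * μ * (c * ρ) ^ P := by field_simp
  have hprimPart := integral_primitive_sub_integral_primitive_mul_le hgc ha₂ hq₁ hg
    hu.meas.aestronglyMeasurable hI1 hIq ht0 ht1
  have hprimBound : a₁ * (∫ x in Ω, |u x|) + a₂ * ∫ x in Ω, |u x| ^ q
      ≤ a₁ * (V ^ ((P - 1) / P) * (c * ρ)) + a₂ * (V ^ ((P - q) / P) * (c * ρ) ^ q) := by
    gcongr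
  have hprim := mul_le_mul_of_nonneg_left
    (hprimPart.trans (mul_le_mul_of_nonneg_left hprimBound (by linarith))) hlam
  have hρP : (c * ρ) ^ P = c ^ P * ρ ^ (P - 1) * ρ := by
    rw [Real.mul_rpow hc hρ, mul_assoc, rpow_sub_one_mul_self hρ (by linarith)]
  have hρq : (c * ρ) ^ q = c ^ q * ρ ^ (q - 1) * ρ := by
    rw [Real.mul_rpow hc hρ, mul_assoc, rpow_sub_one_mul_self hρ (by linarith)]
  rw [hρP] at hpowPart
  rw [hρq] at hprim
  linarith

end Energy

theorem statement10_general
    (n : ℕ) (s : ℝ) (hs : s ∈ Set.Ioo (0:ℝ) 1) (hn : 2 * s < n)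
    (Ω : Set (EV n)) (hΩb : Bornology.IsBounded Ω)
    (K : EV n → ℝ)
    (hKpos : ∀ x : EV n, x ≠ 0 → 0 < K x)
    (c : ℝ) (hc : 0 < c)
    (hclub : IsLUB {ρ : ℝ | ∃ u, MemX0 K Ω u ∧
        ¬ (∀ᵐ x ∂(volume : Measure (EV n)), u x = 0) ∧
        ρ = lpNorm Ω (twoStar n s) u / gNorm K u} c)
    (lam μ : ℝ) (hlam : 0 < lam) (hμ : 0 < μ)
    (g : ℝ → ℝ) (hgc : Continuous g)
    (a₁ a₂ q : ℝ) (ha₁ : 0 < a₁) (ha₂ : 0 < a₂) (hq₁ : 1 ≤ q) (hq₂ : q < twoStar n s)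
    (hg1 : ∀ t : ℝ, |g t| ≤ a₁ + a₂ * |t| ^ (q - 1))
    (SB : ℝ → ℝ)
    (hSB : ∀ ρ : ℝ, SB ρ =
      sSup (energyTilde s K Ω μ lam g '' {u | MemX0 K Ω u ∧ gNorm K u ≤ ρ}))
    (ρ : ℝ) (hρ : 0 < ρ) :
    limsup (fun ε => (SB ρ - SB (ρ - ε)) / ε) (𝓝[>] (0:ℝ)) ≤
      c ^ twoStar n s * μ * ρ ^ (twoStar n s - 1) +
        lam * a₁ * c * (volume Ω).toReal ^ ((twoStar n s - 1) / twoStar n s) +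
        lam * a₂ * c ^ q * (volume Ω).toReal ^ ((twoStar n s - q) / twoStar n s)
          * ρ ^ (q - 1) := by
  have hn0 : 0 < n := by exact_mod_cast (by linarith [hs.1] : (0 : ℝ) < n)
  obtain rfl : SB = fun r => sSup (energyTilde s K Ω μ lam g '' ballX0 K Ω r) := funext hSB
  refine limsup_sSup_image_ballX0_le hρ
    (energyTilde_zero (zero_lt_one.trans (hq₁.trans_lt hq₂)).ne') fun u hu t ht => ?_
  exact energyTilde_le_energyTilde_const_mul_add hn0 hΩb hKpos hc.le hclub.1 hμ.le hlam.le hgc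
    ha₁.le ha₂.le hq₁ hq₂ hg1 hρ.le hu.1 hu.2 ht.1 ht.2

/-- **The key incremental-ratio estimate** (inequality (3.13) of the paper):
`limsup_{ε→0⁺} φ(ε,ρ) ≤ c^{2*} μ ρ^{2*−1} + λ a₁ c |Ω|^{(2*−1)/2*}
+ λ a₂ c^q |Ω|^{(2*−q)/2*} ρ^{q−1}`. -/
theorem statement10
    (n : ℕ) (s : ℝ) (hs : s ∈ Set.Ioo (0:ℝ) 1) (hn : 2 * s < n)
    (Ω : Set (EV n)) (hΩo : IsOpen Ω) (hΩne : Ω.Nonempty) (hΩb : Bornology.IsBounded Ω)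
    (K : EV n → ℝ)
    (hKpos : ∀ x : EV n, x ≠ 0 → 0 < K x)
    (hK1 : Integrable (fun x : EV n => min (‖x‖ ^ 2) 1 * K x))
    (hK2 : ∃ k₀ > 0, ∀ x : EV n, x ≠ 0 → k₀ * ‖x‖ ^ (-((n : ℝ) + 2 * s)) ≤ K x)
    (c : ℝ) (hc : 0 < c)
    (hclub : IsLUB {ρ : ℝ | ∃ u, MemX0 K Ω u ∧
        ¬ (∀ᵐ x ∂(volume : Measure (EV n)), u x = 0) ∧
        ρ = lpNorm Ω (twoStar n s) u / gNorm K u} c)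
    (lam μ : ℝ) (hlam : 0 < lam) (hμ : 0 < μ)
    (g : ℝ → ℝ) (hgc : Continuous g)
    (a₁ a₂ q : ℝ) (ha₁ : 0 < a₁) (ha₂ : 0 < a₂) (hq₁ : 1 ≤ q) (hq₂ : q < twoStar n s)
    (hg1 : ∀ t : ℝ, |g t| ≤ a₁ + a₂ * |t| ^ (q - 1))
    (SB : ℝ → ℝ)
    (hSB : ∀ ρ : ℝ, SB ρ =
      sSup (energyTilde s K Ω μ lam g '' {u | MemX0 K Ω u ∧ gNorm K u ≤ ρ}))
    (ρ : ℝ) (hρ : 0 < ρ) :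
    limsup (fun ε => (SB ρ - SB (ρ - ε)) / ε) (𝓝[>] (0:ℝ)) ≤
      c ^ twoStar n s * μ * ρ ^ (twoStar n s - 1) +
        lam * a₁ * c * (volume Ω).toReal ^ ((twoStar n s - 1) / twoStar n s) +
        lam * a₂ * c ^ q * (volume Ω).toReal ^ ((twoStar n s - q) / twoStar n s)
          * ρ ^ (q - 1) :=
  statement10_general n s hs hn Ω hΩb K hKpos c hc hclub lam μ hlam hμ g hgc a₁ a₂ q ha₁ ha₂ hq₁ hq₂
    hg1 SB hSB ρ hρ
end
end
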